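/- Let B(V, V, E) be a bipartite graph with left-vertex set V, right-vertex set V and edge set E ⊆ V × V. If M¹ and M² are two maximum matchings of B(V, V, E) with right- and left-unmatched vertex sets (U_R(M¹), U_L(M¹)) and (U_R(M²), U_L(M²)) respectively, then there exists a maximum matching M* of B(V, V, E) whose set of right-unmatched vertices is U_R(M¹) and whose set of left-unmatched vertices is U_L(M²). -/

import Mathlib

open Matrix

/-- Controllability matrix `[B, AB, …, A^{n-1}B]` (columns indexed by `Fin (card X) × U`). -/
def ctrbMatrix {X U : Type*} [Fintype X] [DecidableEq X]
    (A : Matrix X X ℝ) (B : Matrix X U ℝ) :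
    Matrix X (Fin (Fintype.card X) × U) ℝ :=
  fun i kj => (A ^ (kj.1 : ℕ) * B) i kj.2

/-- A real pair `(A,B)` is controllable if its controllability matrix has full rank. -/
def Controllable {X U : Type*} [Fintype X] [DecidableEq X] [Fintype U]
    (A : Matrix X X ℝ) (B : Matrix X U ℝ) : Prop :=
  (ctrbMatrix A B).rank = Fintype.card X

/-- `M` has the same sparsity pattern as the Boolean matrix `Mb`. -/
def SameSparsity {X Y : Type*} (M : Matrix X Y ℝ) (Mb : Matrix X Y Bool) : Prop :=
  ∀ i j, M i j = 0 ↔ Mb i j = false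

/-- Structural controllability of a structural (Boolean) pair. -/
def StructurallyControllable {X U : Type*} [Fintype X] [DecidableEq X] [Fintype U]
    (Ab : Matrix X X Bool) (Bb : Matrix X U Bool) : Prop :=
  ∃ A : Matrix X X ℝ, ∃ B : Matrix X U ℝ,
    SameSparsity A Ab ∧ SameSparsity B Bb ∧ Controllable A B

/-- Edge relation of the system digraph `D(Ā,B̄)`. -/
def sysDigraphRel {X U : Type*} (Ab : Matrix X X Bool) (Bb : Matrix X U Bool) :
    (X ⊕ U) → (X ⊕ U) → Prop :=
  fun v w => match v, w with
  | Sum.inl j, Sum.inl i => Ab i j = true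
  | Sum.inr k, Sum.inl i => Bb i k = true
  | _, Sum.inr _ => False

/-- A state vertex is input-reachable if some input vertex has a directed path to it. -/
def InputReachable {X U : Type*} (Ab : Matrix X X Bool) (Bb : Matrix X U Bool) (x : X) : Prop :=
  ∃ u : U, Relation.ReflTransGen (sysDigraphRel Ab Bb) (Sum.inr u) (Sum.inl x)

/-- Edge relation of the system bipartite graph `B(Ā,B̄)` (left = states ⊕ inputs, right = states). -/
def sysBipEdge {X U : Type*} (Ab : Matrix X X Bool) (Bb : Matrix X U Bool) :
    (X ⊕ U) → X → Prop :=
  fun v i => match v with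
  | Sum.inl j => Ab i j = true
  | Sum.inr k => Bb i k = true

/-- Edge relation of the state bipartite graph `B(Ā)`. -/
def stateBipEdge {X : Type*} (Ab : Matrix X X Bool) : X → X → Prop :=
  fun j i => Ab i j = true

/-- A matching of a bipartite graph with edge relation `E`: a set of edges sharing no
left vertex and no right vertex. -/
def IsMatching {α β : Type*} (E : α → β → Prop) (M : Set (α × β)) : Prop :=
  (∀ e ∈ M, E e.1 e.2) ∧
  (∀ e ∈ M, ∀ f ∈ M, e.1 = f.1 → e = f) ∧
  (∀ e ∈ M, ∀ f ∈ M, e.2 = f.2 → e = f)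

/-- Right vertices belonging to no edge of `M`. -/
def rightUnmatched {α β : Type*} (M : Set (α × β)) : Set β :=
  {b | ∀ e ∈ M, e.2 ≠ b}

/-- Left vertices belonging to no edge of `M`. -/
def leftUnmatched {α β : Type*} (M : Set (α × β)) : Set α :=
  {a | ∀ e ∈ M, e.1 ≠ a}

/-- A maximum matching: a matching of the largest cardinality. -/
def IsMaxMatching {α β : Type*} (E : α → β → Prop) (M : Set (α × β)) : Prop :=
  IsMatching E M ∧ ∀ M' : Set (α × β), IsMatching E M' → M'.ncard ≤ M.ncard

/-- `S` is a strongly connected component of the digraph with edge relation `R`. -/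
def IsSCC {V : Type*} (R : V → V → Prop) (S : Set V) : Prop :=
  S.Nonempty ∧ (∀ u ∈ S, ∀ v ∈ S, Relation.ReflTransGen R u v) ∧
  ∀ w : V, (∀ u ∈ S, Relation.ReflTransGen R u w ∧ Relation.ReflTransGen R w u) → w ∈ S

/-- An SCC is non-top linked if it has no incoming edge from outside. -/
def NonTopLinked {V : Type*} (R : V → V → Prop) (S : Set V) : Prop :=
  ∀ u v : V, R u v → v ∈ S → u ∈ S

/-- Dynamics pattern `(I_r ⊗ Ā') ∨ (Ē ⊗ H̄)` of a system of `r` similar subsystems. -/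
def simA {n : ℕ} (r : ℕ) (A' H : Matrix (Fin n) (Fin n) Bool)
    (E : Matrix (Fin r) (Fin r) Bool) :
    Matrix (Fin r × Fin n) (Fin r × Fin n) Bool :=
  fun q q' => ((if q.1 = q'.1 then A' q.2 q'.2 else false) || (E q.1 q'.1 && H q.2 q'.2))

/-- Input pattern `I_r ⊗ B̄'` of a system of `r` similar subsystems. -/
def simB {n p : ℕ} (r : ℕ) (B' : Matrix (Fin n) (Fin p) Bool) :
    Matrix (Fin r × Fin n) (Fin r × Fin p) Bool :=
  fun q k => if q.1 = k.1 then B' q.2 k.2 else false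

/-- Entrywise OR of Boolean matrices. -/
def orMat {X Y : Type*} (M N : Matrix X Y Bool) : Matrix X Y Bool :=
  fun i j => M i j || N i j

/-- Dynamics pattern of an interconnected system: diagonal blocks `Ā_i`,
off-diagonal blocks `Ē_{i,j}`. -/
def interA {r : ℕ} {n : Fin r → ℕ}
    (A : ∀ i, Matrix (Fin (n i)) (Fin (n i)) Bool)
    (E : ∀ i j, Matrix (Fin (n i)) (Fin (n j)) Bool) :
    Matrix (Σ i, Fin (n i)) (Σ i, Fin (n i)) Bool :=
  fun q q' => if h : q'.1 = q.1 then A q.1 q.2 (h ▸ q'.2) else E q.1 q'.1 q.2 q'.2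

/-- Input pattern of an interconnected system: block diagonal with blocks `B̄_i`. -/
def interB {r : ℕ} {n p : Fin r → ℕ}
    (B : ∀ i, Matrix (Fin (n i)) (Fin (p i)) Bool) :
    Matrix (Σ i, Fin (n i)) (Σ i, Fin (p i)) Bool :=
  fun q k => if h : k.1 = q.1 then B q.1 q.2 (h ▸ k.2) else false


/-!
Among the maximum matchings whose right-unmatched set is that of `M¹`, take one, `M`, sharing
as many edges as possible with `M²`. If some edge `(a, b)` of `M²` had `a` unmatched in `M`,
then `b` is matched in `M` (else `M` could be enlarged), say by `(a', b)`, and replacing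
`(a', b)` with `(a, b)` gives a maximum matching with the same right-unmatched set and one more
common edge with `M²`. Hence every left vertex matched by `M²` is matched by `M`, and as both
matchings have the same size, they match the same left vertices.
-/

namespace IsMatching

variable {α β : Type*} {E : α → β → Prop} {M N : Set (α × β)}

theorem mono (hM : IsMatching E M) (hNM : N ⊆ M) : IsMatching E N :=
  ⟨fun e he => hM.1 e (hNM he),
    fun e he f hf => hM.2.1 e (hNM he) f (hNM hf),
    fun e he f hf => hM.2.2 e (hNM he) f (hNM hf)⟩

theorem insert_of_unmatched (hM : IsMatching E M) {e : α × β} (he : E e.1 e.2)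
    (hfst : e.1 ∈ leftUnmatched M) (hsnd : e.2 ∈ rightUnmatched M) :
    IsMatching E (insert e M) := by
  refine ⟨?_, ?_, ?_⟩
  · rintro g (rfl | hg)
    exacts [he, hM.1 g hg]
  · rintro g (rfl | hg) f (rfl | hf) hgf
    exacts [rfl, absurd hgf.symm (hfst f hf), absurd hgf (hfst g hg), hM.2.1 g hg f hf hgf]
  · rintro g (rfl | hg) f (rfl | hf) hgf
    exacts [rfl, absurd hgf.symm (hsnd f hf), absurd hgf (hsnd g hg), hM.2.2 g hg f hf hgf]

theorem insert_sdiff_singleton (hM : IsMatching E M) {e e' : α × β} (he : e ∈ M)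
    (he' : E e'.1 e'.2) (hfree : e'.1 ∈ leftUnmatched M) (hsnd : e'.2 = e.2) :
    IsMatching E (insert e' (M \ {e})) :=
  (hM.mono Set.sdiff_subset).insert_of_unmatched he' (fun f hf => hfree f hf.1)
    fun f hf hfe => hf.2 (hM.2.2 f hf.1 e he (hfe.trans hsnd))

theorem ncard_image_fst (hM : IsMatching E M) : (Prod.fst '' M).ncard = M.ncard :=
  Set.InjOn.ncard_image fun e he f hf => hM.2.1 e he f hf

end IsMatching

section Unmatched

variable {α β : Type*}

theorem leftUnmatched_eq_compl_image_fst (M : Set (α × β)) :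
    leftUnmatched M = (Prod.fst '' M)ᶜ := by
  ext
  simp only [Set.mem_compl_iff, Set.mem_image, not_exists, not_and]
  rfl

theorem rightUnmatched_eq_compl_image_snd (M : Set (α × β)) :
    rightUnmatched M = (Prod.snd '' M)ᶜ := by
  ext
  simp only [Set.mem_compl_iff, Set.mem_image, not_exists, not_and]
  rfl

theorem rightUnmatched_insert_sdiff_singleton {M : Set (α × β)} {e e' : α × β} (he : e ∈ M)
    (hsnd : e'.2 = e.2) : rightUnmatched (insert e' (M \ {e})) = rightUnmatched M := by
  rw [rightUnmatched_eq_compl_image_snd, rightUnmatched_eq_compl_image_snd, Set.image_insert_eq,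
    hsnd, ← Set.image_insert_eq, Set.insert_sdiff_singleton, Set.insert_eq_of_mem he]

end Unmatched

namespace IsMaxMatching

variable {α β : Type*} {E : α → β → Prop} {M N : Set (α × β)}

theorem ncard_eq (hM : IsMaxMatching E M) (hN : IsMaxMatching E N) : M.ncard = N.ncard :=
  le_antisymm (hN.2 M hM.1) (hM.2 N hN.1)

theorem of_ncard_eq (hM : IsMaxMatching E M) (hN : IsMatching E N) (hcard : N.ncard = M.ncard) :
    IsMaxMatching E N :=
  ⟨hN, fun M' hM' => hcard ▸ hM.2 M' hM'⟩

theorem exists_mem_snd_eq (hM : IsMaxMatching E M) (hfin : M.Finite) {a : α} {b : β}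
    (hab : E a b) (ha : a ∈ leftUnmatched M) : ∃ e ∈ M, e.2 = b := by
  by_contra! hb
  have hnotMem : (a, b) ∉ M := fun h => ha _ h rfl
  have hle := hM.2 _ (hM.1.insert_of_unmatched (e := (a, b)) hab ha hb)
  rw [Set.ncard_insert_of_notMem hnotMem hfin] at hle
  omega

end IsMaxMatching

theorem IsMatching.image_fst_subset_of_maximalFor {α β : Type*} {E : α → β → Prop}
    {M M₂ : Set (α × β)} {R : Set β} (hM₂ : IsMatching E M₂) (hfin : M.Finite)
    (hopt : MaximalFor (fun N => IsMaxMatching E N ∧ rightUnmatched N = R)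
      (fun N => (N ∩ M₂).ncard) M) :
    Prod.fst '' M₂ ⊆ Prod.fst '' M := by
  obtain ⟨⟨hM, hright⟩, hopt⟩ := hopt
  rintro _ ⟨e', he'M₂, rfl⟩
  by_contra hmatched
  have hfree : e'.1 ∈ leftUnmatched M := by
    rwa [leftUnmatched_eq_compl_image_fst]
  obtain ⟨e, heM, hsnd⟩ := hM.exists_mem_snd_eq hfin (hM₂.1 e' he'M₂) hfree
  have he'M : e' ∉ M := fun h => hfree e' h rfl
  have heM₂ : e ∉ M₂ := fun h => hfree e heM (congrArg Prod.fst (hM₂.2.2 e h e' he'M₂ hsnd))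
  set N := insert e' (M \ {e})
  have hNmax : IsMaxMatching E N := by
    refine hM.of_ncard_eq (hM.1.insert_sdiff_singleton heM (hM₂.1 e' he'M₂) hfree hsnd.symm) ?_
    rw [Set.ncard_insert_of_notMem (fun h => he'M h.1) hfin.sdiff,
      Set.ncard_sdiff_singleton_add_one heM hfin]
  have hNinter : (N ∩ M₂).ncard = (M ∩ M₂).ncard + 1 := by
    rw [Set.insert_inter_of_mem he'M₂, ← Set.inter_sdiff_right_comm,
      Set.sdiff_singleton_eq_self (fun h => heM₂ h.2),
      Set.ncard_insert_of_notMem (fun h => he'M h.1) (hfin.inter_of_left _)]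
  have : (N ∩ M₂).ncard ≤ (M ∩ M₂).ncard :=
    hopt ⟨hNmax, (rightUnmatched_insert_sdiff_singleton heM hsnd.symm).trans hright⟩
      (show (M ∩ M₂).ncard ≤ (N ∩ M₂).ncard by omega)
  omega

theorem exists_maxMatching_mixing_unmatched
    {V : Type*} [Fintype V] (E : V → V → Prop) (M1 M2 : Set (V × V))
    (h1 : IsMaxMatching E M1) (h2 : IsMaxMatching E M2) :
    ∃ M : Set (V × V), IsMaxMatching E M ∧
      rightUnmatched M = rightUnmatched M1 ∧ leftUnmatched M = leftUnmatched M2 := by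
  obtain ⟨M, hopt⟩ := Set.Finite.exists_maximalFor (fun N => (N ∩ M2).ncard)
    {N | IsMaxMatching E N ∧ rightUnmatched N = rightUnmatched M1} (Set.toFinite _) ⟨M1, h1, rfl⟩
  obtain ⟨hM, hright⟩ := hopt.1
  have hsub : Prod.fst '' M2 ⊆ Prod.fst '' M :=
    h2.1.image_fst_subset_of_maximalFor (Set.toFinite M) hopt
  have hleft : Prod.fst '' M2 = Prod.fst '' M :=
    Set.eq_of_subset_of_ncard_le hsub
      (by rw [hM.1.ncard_image_fst, h2.1.ncard_image_fst, hM.ncard_eq h2]) (Set.toFinite _)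
  refine ⟨M, hM, hright, ?_⟩
  rw [leftUnmatched_eq_compl_image_fst, leftUnmatched_eq_compl_image_fst, hleft]
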